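/- arXiv:2401.12899 — 2 statements merged into one kernel-verified Lean document; each statement's English description precedes it below -/
import Mathlib

section
/- Let h > 0, k ≥ 1 and v ∈ H¹(ℝ). Then ⟨M_{h,k} v, v'⟩_{L²} ≤ 0. -/
/-!
Write `g = v'` and `C t = ∫ g (x + t) * g x` for its autocorrelation. The differences
`v (ξ + h) - v ξ` and `v ξ - v (ξ - h)` are integrals of `g (ξ + ·)` over `(0, h]` and `(-h, 0]`,
so by Fubini both pair with `g` to `∫ t in (0, h], C t`, using that `C` is even. Hence the second
difference contributes nothing and the integral equals `c * (∫ t in (0, h], C t / h - ‖g‖²)` with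
`c = 2(k - 1)/(h(k + 1)) ≥ 0`. Since `C t ≤ ‖g‖²` (from `2ab ≤ a² + b²` and translation
invariance), this is `≤ 0`: the real-space form of `ω (sin (ω h) - ω h) ≤ 0` for the symbol.
-/

open MeasureTheory Set

noncomputable def autocorrelation (g : ℝ → ℝ) (t : ℝ) : ℝ := ∫ x, g (x + t) * g x

section Autocorrelation

variable {g : ℝ → ℝ}

lemma integrable_comp_add_right_mul (hg : MemLp g 2) (t : ℝ) :
    Integrable (fun x => g (x + t) * g x) :=
  (hg.comp_measurePreserving (measurePreserving_add_right volume t)).integrable_mul hg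

lemma autocorrelation_neg (g : ℝ → ℝ) (t : ℝ) : autocorrelation g (-t) = autocorrelation g t := by
  rw [autocorrelation, ← integral_add_right_eq_self _ t]
  simp only [add_neg_cancel_right, autocorrelation, mul_comm]

lemma autocorrelation_le (hg : MemLp g 2) (t : ℝ) : autocorrelation g t ≤ ∫ x, g x ^ 2 := by
  have hsq : Integrable (fun x => g x ^ 2) := hg.integrable_sq
  have hsq_shift : Integrable (fun x => g (x + t) ^ 2) :=
    (measurePreserving_add_right volume t).integrable_comp_of_integrable hsq
  calc autocorrelation g t ≤ ∫ x, (g (x + t) ^ 2 + g x ^ 2) / 2 :=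
        integral_mono (integrable_comp_add_right_mul hg t) ((hsq_shift.add hsq).div_const 2)
          fun x => by nlinarith [sq_nonneg (g (x + t) - g x)]
    _ = ∫ x, g x ^ 2 := by
        rw [integral_div, integral_add hsq_shift hsq, integral_add_right_eq_self (fun x => g x ^ 2) t]
        ring

lemma integrable_uncurry_comp_add_mul (hgm : Measurable g) (hg : MemLp g 2)
    (ν : Measure ℝ) [IsFiniteMeasure ν] :
    Integrable (Function.uncurry fun x t => g (x + t) * g x) (volume.prod ν) := by
  have hm : StronglyMeasurable (Function.uncurry fun x t => g (x + t) * g x) :=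
    ((hgm.comp measurable_add).mul (hgm.comp measurable_fst)).stronglyMeasurable
  refine (integrable_prod_iff' hm.aestronglyMeasurable).2
    ⟨.of_forall (integrable_comp_add_right_mul hg), ?_⟩
  refine (integrable_const (∫ x, g x ^ 2)).mono' hm.norm.integral_prod_left'.aestronglyMeasurable
    (.of_forall fun t => ?_)
  calc ‖∫ x, ‖g (x + t) * g x‖‖ = autocorrelation (fun x => ‖g x‖) t := by
        rw [Real.norm_of_nonneg (integral_nonneg fun _ => norm_nonneg _)]
        simp only [autocorrelation, norm_mul]
    _ ≤ ∫ x, g x ^ 2 := by simpa only [Real.norm_eq_abs, sq_abs] using autocorrelation_le hg.norm t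

variable (ν : Measure ℝ) [IsFiniteMeasure ν]

lemma integrable_integral_comp_add_mul (hgm : Measurable g) (hg : MemLp g 2) :
    Integrable (fun x => (∫ t, g (x + t) ∂ν) * g x) := by
  simpa only [Function.uncurry_apply_pair, ← integral_mul_const] using
    (integrable_uncurry_comp_add_mul hgm hg ν).integral_prod_left

lemma integral_integral_comp_add_mul (hgm : Measurable g) (hg : MemLp g 2) :
    ∫ x, (∫ t, g (x + t) ∂ν) * g x = ∫ t, autocorrelation g t ∂ν := by
  simp_rw [← integral_mul_const]
  exact integral_integral_swap (integrable_uncurry_comp_add_mul hgm hg ν)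

lemma integral_autocorrelation_le (hgm : Measurable g) (hg : MemLp g 2) :
    ∫ t, autocorrelation g t ∂ν ≤ ν.real univ * ∫ x, g x ^ 2 := by
  calc ∫ t, autocorrelation g t ∂ν ≤ ∫ _t, (∫ x, g x ^ 2) ∂ν :=
        integral_mono (integrable_uncurry_comp_add_mul hgm hg ν).integral_prod_right
          (integrable_const _) (autocorrelation_le hg)
    _ = ν.real univ * ∫ x, g x ^ 2 := by rw [integral_const, smul_eq_mul]

lemma setIntegral_Ioc_neg_autocorrelation (g : ℝ → ℝ) {h : ℝ} (hh : 0 ≤ h) :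
    ∫ t in Ioc (-h) 0, autocorrelation g t = ∫ t in Ioc 0 h, autocorrelation g t := by
  rw [← intervalIntegral.integral_of_le (neg_nonpos.2 hh), ← intervalIntegral.integral_of_le hh,
    ← neg_zero, ← intervalIntegral.integral_comp_neg]
  simp only [autocorrelation_neg, neg_zero]

end Autocorrelation

section Differences

variable {v : ℝ → ℝ} {a b : ℝ}

lemma setIntegral_Ioc_deriv_comp_add (hv : Differentiable ℝ v) (hv' : MemLp (deriv v) 2)
    (hab : a ≤ b) (x : ℝ) :
    ∫ t in Ioc a b, deriv v (x + t) = v (x + b) - v (x + a) := by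
  rw [← intervalIntegral.integral_of_le hab, intervalIntegral.integral_comp_add_left (deriv v) x,
    intervalIntegral.integral_deriv_eq_sub (fun y _ => hv y)
      ((hv'.locallyIntegrable one_le_two).integrableOn_isCompact isCompact_uIcc).intervalIntegrable]

lemma integrable_sub_mul_deriv (hv : Differentiable ℝ v) (hv' : MemLp (deriv v) 2)
    (hab : a ≤ b) :
    Integrable fun x => (v (x + b) - v (x + a)) * deriv v x := by
  simpa only [setIntegral_Ioc_deriv_comp_add hv hv' hab] using
    integrable_integral_comp_add_mul (volume.restrict (Ioc a b)) (measurable_deriv v) hv'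

lemma integral_sub_mul_deriv (hv : Differentiable ℝ v) (hv' : MemLp (deriv v) 2)
    (hab : a ≤ b) :
    ∫ x, (v (x + b) - v (x + a)) * deriv v x = ∫ t in Ioc a b, autocorrelation (deriv v) t := by
  simpa only [setIntegral_Ioc_deriv_comp_add hv hv' hab] using
    integral_integral_comp_add_mul (volume.restrict (Ioc a b)) (measurable_deriv v) hv'

end Differences

theorem stmt_13_general (h k : ℝ) (hh : 0 < h) (hk : 1 ≤ k)
    (v : ℝ → ℝ) (hdiff : Differentiable ℝ v)
    (hv' : MemLp (deriv v) 2 (volume : Measure ℝ)) :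
    (∫ ξ : ℝ,
        ((v (ξ + h) - 2 * v ξ + v (ξ - h)) / h ^ 2
          + (2 * (k - 1) / (h * (k + 1)))
              * ((v (ξ + h) - v (ξ - h)) / (2 * h) - deriv v ξ)) * deriv v ξ) ≤ 0 := by
  set c := 2 * (k - 1) / (h * (k + 1))
  have hc : 0 ≤ c := div_nonneg (by linarith) (by positivity)
  set D := ∫ t in Ioc 0 h, autocorrelation (deriv v) t
  set A := ∫ x, deriv v x ^ 2
  have hD : D ≤ h * A := by
    simpa only [measureReal_restrict_apply_univ, Real.volume_real_Ioc_of_le hh.le, sub_zero] using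
      integral_autocorrelation_le (volume.restrict (Ioc 0 h)) (measurable_deriv v) hv'
  have hfwd := integrable_sub_mul_deriv hdiff hv' hh.le
  have hbwd := integrable_sub_mul_deriv hdiff hv' (neg_nonpos.2 hh.le)
  calc _ = ∫ x, ((1 / h ^ 2 + c / (2 * h)) * ((v (x + h) - v (x + 0)) * deriv v x)
          + (c / (2 * h) - 1 / h ^ 2) * ((v (x + 0) - v (x + -h)) * deriv v x)
          - c * deriv v x ^ 2) := by
        congr 1; ext x; simp only [add_zero, ← sub_eq_add_neg]; ring
    _ = (1 / h ^ 2 + c / (2 * h)) * D + (c / (2 * h) - 1 / h ^ 2) * D - c * A := by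
        rw [integral_sub, integral_add, integral_const_mul, integral_const_mul,
          integral_const_mul, integral_sub_mul_deriv hdiff hv' hh.le,
          integral_sub_mul_deriv hdiff hv' (neg_nonpos.2 hh.le),
          setIntegral_Ioc_neg_autocorrelation _ hh.le]
        exacts [hfwd.const_mul _, hbwd.const_mul _, (hfwd.const_mul _).add (hbwd.const_mul _),
          hv'.integrable_sq.const_mul c]
    _ = c * (D / h - A) := by field_simp; ring
    _ ≤ 0 := mul_nonpos_of_nonneg_of_nonpos hc (sub_nonpos.2 ((div_le_iff₀ hh).2 (by linarith)))

theorem stmt_13 (h k : ℝ) (hh : 0 < h) (hk : 1 ≤ k)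
    (v : ℝ → ℝ) (hdiff : Differentiable ℝ v)
    (hv : MemLp v 2 (volume : Measure ℝ))
    (hv' : MemLp (deriv v) 2 (volume : Measure ℝ)) :
    (∫ ξ : ℝ,
        ((v (ξ + h) - 2 * v ξ + v (ξ - h)) / h ^ 2
          + (2 * (k - 1) / (h * (k + 1)))
              * ((v (ξ + h) - v (ξ - h)) / (2 * h) - deriv v ξ)) * deriv v ξ) ≤ 0 :=
  stmt_13_general h k hh hk v hdiff hv'
end

section
/- Let f ∈ C³(ℝ) and define f_{3,∞}(ξ) = sup_{|ξ'-ξ| ≤ 1} |f'''(ξ')|; assume f_{3,∞} ∈ L²(ℝ). Then for every 0 < h < 1 and k ≥ 1, ‖M_{h,k} f - f''‖_{L²} ≤ 2h ‖f_{3,∞}‖_{L²}. -/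
open MeasureTheory Set

/-!
Expanding `f (ξ ± h)` to second order with Lagrange remainders `A = f''' c₁`, `B = f''' c₂`, the
error `M_{h,k} f ξ - f'' ξ` equals `h (A - B) / 6 + r h (A + B) / 6` with `r = (k - 1) / (k + 1)`,
and `0 ≤ r ≤ 1`. As `c₁, c₂` lie within `h < 1` of `ξ`, the error is at most `(2/3) h f_{3,∞} ξ`
pointwise, and the `L²` bound follows by monotonicity of the norm.
-/

theorem exists_eq_taylor_two_add_remainder {f : ℝ → ℝ} (hf : ContDiff ℝ 3 f) {x₀ x : ℝ}
    (hx : x₀ ≠ x) :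
    ∃ c ∈ uIoo x₀ x, f x = f x₀ + deriv f x₀ * (x - x₀) + deriv (deriv f) x₀ * (x - x₀) ^ 2 / 2
      + iteratedDeriv 3 f c * (x - x₀) ^ 3 / 6 := by
  obtain ⟨c, hc, hTaylor⟩ :=
    taylor_mean_remainder_lagrange_iteratedDeriv (n := 2) hx hf.contDiffOn
  have hWithin (n : ℕ) (hn : n ≤ 3) :
      iteratedDerivWithin n f (uIcc x₀ x) x₀ = iteratedDeriv n f x₀ :=
    iteratedDerivWithin_eq_iteratedDeriv (uniqueDiffOn_uIcc hx)
      (hf.contDiffAt.of_le (by exact_mod_cast hn)) left_mem_uIcc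
  refine ⟨c, hc, ?_⟩
  rw [taylor_within_apply, Finset.sum_range_succ, Finset.sum_range_succ, Finset.sum_range_one,
    hWithin 0 (by norm_num), hWithin 1 (by norm_num), hWithin 2 (by norm_num)] at hTaylor
  rw [iteratedDeriv_zero, iteratedDeriv_one,
    show iteratedDeriv 2 f = deriv (deriv f) by simp [iteratedDeriv_succ]] at hTaylor
  norm_num [Nat.factorial] at hTaylor
  linarith

noncomputable def centralSecondDiff (f : ℝ → ℝ) (h ξ : ℝ) : ℝ :=
  (f (ξ + h) - 2 * f ξ + f (ξ - h)) / h ^ 2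

noncomputable def centralDiff (f : ℝ → ℝ) (h ξ : ℝ) : ℝ :=
  (f (ξ + h) - f (ξ - h)) / (2 * h)

theorem abs_centralSecondDiff_add_centralDiff_sub_le {f : ℝ → ℝ} (hf : ContDiff ℝ 3 f)
    {h r M ξ : ℝ} (hh : 0 < h) (hr₀ : 0 ≤ r) (hr₁ : r ≤ 1)
    (hM : ∀ c ∈ Ioo (ξ - h) (ξ + h), |iteratedDeriv 3 f c| ≤ M) :
    |centralSecondDiff f h ξ + 2 * r / h * (centralDiff f h ξ - deriv f ξ) - deriv (deriv f) ξ|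
      ≤ 2 / 3 * h * M := by
  obtain ⟨c₁, hc₁, hf₁⟩ :=
    exists_eq_taylor_two_add_remainder hf (x₀ := ξ) (x := ξ + h) (by linarith)
  obtain ⟨c₂, hc₂, hf₂⟩ :=
    exists_eq_taylor_two_add_remainder hf (x₀ := ξ) (x := ξ - h) (by linarith)
  rw [uIoo_of_le (by linarith)] at hc₁
  rw [uIoo_of_ge (by linarith)] at hc₂
  set A := iteratedDeriv 3 f c₁
  set B := iteratedDeriv 3 f c₂
  have hA : |A| ≤ M := hM c₁ ⟨by linarith [hc₁.1], hc₁.2⟩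
  have hB : |B| ≤ M := hM c₂ ⟨hc₂.1, by linarith [hc₂.2]⟩
  have hError : centralSecondDiff f h ξ + 2 * r / h * (centralDiff f h ξ - deriv f ξ)
      - deriv (deriv f) ξ = h * (A - B) / 6 + r * (h * (A + B) / 6) := by
    rw [centralSecondDiff, centralDiff, hf₁, hf₂]
    field_simp
    ring
  calc _ ≤ h * |A - B| / 6 + r * (h * |A + B| / 6) := by
        rw [hError]
        refine (abs_add_le _ _).trans_eq ?_
        rw [abs_mul, abs_div, abs_mul, abs_div, abs_mul, abs_of_pos hh, abs_of_nonneg hr₀]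
        norm_num
    _ ≤ h * (2 * M) / 6 + 1 * (h * (2 * M) / 6) := by
        gcongr
        · linarith [abs_sub A B]
        · linarith [abs_add_le A B]
    _ = 2 / 3 * h * M := by ring

theorem stmt_14_general (f : ℝ → ℝ) (hf : ContDiff ℝ 3 f)
    (f3 : ℝ → ℝ)
    (hf3 : f3 = fun ξ => sSup ((fun ξ' => |iteratedDeriv 3 f ξ'|) '' Set.Icc (ξ - 1) (ξ + 1)))
    (h k : ℝ) (hh0 : 0 < h) (hh1 : h < 1) (hk : 1 ≤ k) :
    eLpNorm
        (fun ξ =>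
          (f (ξ + h) - 2 * f ξ + f (ξ - h)) / h ^ 2
            + (2 * (k - 1) / (h * (k + 1)))
                * ((f (ξ + h) - f (ξ - h)) / (2 * h) - deriv f ξ)
            - deriv (deriv f) ξ)
        2 (volume : Measure ℝ)
      ≤ ENNReal.ofReal (2 * h) * eLpNorm f3 2 (volume : Measure ℝ) := by
  have hf3_ge (ξ : ℝ) : ∀ c ∈ Ioo (ξ - h) (ξ + h), |iteratedDeriv 3 f c| ≤ f3 ξ := fun c hc =>
    hf3 ▸ (hf.continuous_iteratedDeriv 3 le_rfl).abs.continuousOn.le_sSup_image_Icc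
      ⟨by linarith [hc.1], by linarith [hc.2]⟩
  have hcoeff : 2 * (k - 1) / (h * (k + 1)) = 2 * ((k - 1) / (k + 1)) / h := by
    field_simp
  have hr₀ : 0 ≤ (k - 1) / (k + 1) := div_nonneg (by linarith) (by linarith)
  have hr₁ : (k - 1) / (k + 1) ≤ 1 := (div_le_one (by linarith)).2 (by linarith)
  have hPointwise (ξ : ℝ) : ‖centralSecondDiff f h ξ + 2 * (k - 1) / (h * (k + 1))
      * (centralDiff f h ξ - deriv f ξ) - deriv (deriv f) ξ‖ ≤ 2 * h * f3 ξ := by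
    have hf3_nonneg : 0 ≤ f3 ξ :=
      (abs_nonneg _).trans (hf3_ge ξ ξ ⟨by linarith, by linarith⟩)
    rw [Real.norm_eq_abs, hcoeff]
    refine (abs_centralSecondDiff_add_centralDiff_sub_le hf hh0 hr₀ hr₁ (hf3_ge ξ)).trans ?_
    nlinarith
  calc _ ≤ eLpNorm ((2 * h) • f3) 2 volume := eLpNorm_mono_real hPointwise
    _ = ENNReal.ofReal (2 * h) * eLpNorm f3 2 volume := by
        rw [eLpNorm_const_smul, Real.enorm_eq_ofReal (by linarith)]

theorem stmt_14 (f : ℝ → ℝ) (hf : ContDiff ℝ 3 f)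
    (f3 : ℝ → ℝ)
    (hf3 : f3 = fun ξ => sSup ((fun ξ' => |iteratedDeriv 3 f ξ'|) '' Set.Icc (ξ - 1) (ξ + 1)))
    (hf3L2 : MemLp f3 2 (volume : Measure ℝ))
    (h k : ℝ) (hh0 : 0 < h) (hh1 : h < 1) (hk : 1 ≤ k) :
    eLpNorm
        (fun ξ =>
          (f (ξ + h) - 2 * f ξ + f (ξ - h)) / h ^ 2
            + (2 * (k - 1) / (h * (k + 1)))
                * ((f (ξ + h) - f (ξ - h)) / (2 * h) - deriv f ξ)
            - deriv (deriv f) ξ)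
        2 (volume : Measure ℝ)
      ≤ ENNReal.ofReal (2 * h) * eLpNorm f3 2 (volume : Measure ℝ) :=
  stmt_14_general f hf f3 hf3 h k hh0 hh1 hk
end
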